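/- Under the same setup as Theorem gas1 (f square-integrable on (0,1)^d with uniform measure, C_gas = U Λ U^T with eigenvalues λ_1 ≥ ... ≥ λ_d ≥ 0, global activity scores γ_i(m) = Σ_{j=1}^m λ_j u_{ij}^2), for every i = 1,...,d and every m = 1,...,d-1, the upper Sobol' index satisfies S̄_i ≤ (γ_i(m) + λ_{m+1}) / (2σ²). -/

import Mathlib

open MeasureTheory Matrix Finset

/-!
On the unit cube `|vᵢ - zᵢ| < 1`, so the squared increment `(f z - f(z with zᵢ := vᵢ))²` is
dominated by the squared difference quotient in direction `i`; integrating, `2σ² S̄ᵢ ≤ Cᵢᵢ`.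
From `C = U Λ Uᵀ` we get `Cᵢᵢ = ∑ⱼ λⱼ uᵢⱼ² = γᵢ(d)`, and since the row `uᵢ` of the orthogonal
matrix `U` has unit norm and `λ` is nonincreasing, the tail `∑_{j ≥ m} λⱼ uᵢⱼ²` is at most `λ_m`.
-/

lemma sq_le_sq_div_of_abs_le_one (t : ℝ) {s : ℝ} (hs0 : s ≠ 0) (hs : |s| ≤ 1) :
    t ^ 2 ≤ (t / s) ^ 2 := by
  have hs2 : s ^ 2 ≤ 1 := (sq_le_one_iff_abs_le_one s).2 hs
  rw [div_pow, le_div_iff₀ (by positivity)]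
  exact mul_le_of_le_one_right (sq_nonneg t) hs2

lemma sq_sub_update_le_sq_diffQuot {ι : Type*} [DecidableEq ι] (f : (ι → ℝ) → ℝ) (i : ι)
    {z v : ι → ℝ} (h : |v i - z i| ≤ 1) :
    (f z - f (Function.update z i (v i))) ^ 2
      ≤ ((f (Function.update z i (v i)) - f z) / (v i - z i)) ^ 2 := by
  rcases eq_or_ne (v i) (z i) with hvz | hvz
  · simp [hvz]
  · rw [← neg_sub, neg_sq]
    exact sq_le_sq_div_of_abs_le_one _ (sub_ne_zero.2 hvz) h

lemma integral_integral_sq_sub_update_le {ι : Type*} [DecidableEq ι] {μ : Measure (ι → ℝ)}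
    [SFinite μ] (f : (ι → ℝ) → ℝ) (i : ι) (hμ : ∀ᵐ x ∂μ, x i ∈ Set.Ioo (0 : ℝ) 1)
    (hg : Integrable (fun p : (ι → ℝ) × (ι → ℝ) =>
      ((f (Function.update p.1 i (p.2 i)) - f p.1) / (p.2 i - p.1 i)) ^ 2) (μ.prod μ)) :
    ∫ z, ∫ v, (f z - f (Function.update z i (v i))) ^ 2 ∂μ ∂μ
      ≤ ∫ z, ∫ v, ((f (Function.update z i (v i)) - f z) / (v i - z i)) ^ 2 ∂μ ∂μ := by
  refine integral_mono_of_nonneg (.of_forall fun z => integral_nonneg fun v => sq_nonneg _)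
    hg.integral_prod_left ?_
  filter_upwards [hμ, hg.prod_right_ae] with z hz hgz
  refine integral_mono_of_nonneg (.of_forall fun v => sq_nonneg _) hgz ?_
  filter_upwards [hμ] with v hv
  exact sq_sub_update_le_sq_diffQuot f i
    (abs_sub_lt_iff.2 ⟨by linarith [hv.2, hz.1], by linarith [hz.2, hv.1]⟩).le

lemma ae_mem_Ioo_unitCube {ι : Type*} [Fintype ι] (i : ι) :
    ∀ᵐ x ∂Measure.pi (fun _ : ι => volume.restrict (Set.Ioo (0 : ℝ) 1)),
      x i ∈ Set.Ioo (0 : ℝ) 1 :=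
  Measure.tendsto_eval_ae_ae.eventually (ae_restrict_mem measurableSet_Ioo)

lemma mul_diagonal_mul_transpose_apply_self {n R : Type*} [Fintype n] [DecidableEq n]
    [CommSemiring R] (U : Matrix n n R) (lam : n → R) (i : n) :
    (U * diagonal lam * Uᵀ) i i = ∑ j, lam j * U i j ^ 2 := by
  simp only [mul_apply, diagonal_apply, transpose_apply, mul_ite, mul_zero,
    Finset.sum_ite_eq', Finset.mem_univ, if_true]
  exact Finset.sum_congr rfl fun j _ => by ring

lemma sum_row_sq_eq_one_of_transpose_mul_self {n R : Type*} [Fintype n] [DecidableEq n]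
    [CommRing R] {U : Matrix n n R} (hU : Uᵀ * U = 1) (i : n) :
    ∑ j, U i j ^ 2 = 1 := by
  have hii := congrFun (congrFun (mul_eq_one_comm.1 hU : U * Uᵀ = 1) i) i
  simpa [mul_apply, sq] using hii

lemma sum_mul_le_sum_filter_lt_add {ι : Type*} [Fintype ι] [LinearOrder ι] {lam w : ι → ℝ}
    (hlam : Antitone lam) (hw0 : ∀ j, 0 ≤ w j) (hw : ∑ j, w j ≤ 1) {k : ι} (hk : 0 ≤ lam k) :
    ∑ j, lam j * w j ≤ ∑ j ∈ univ.filter (· < k), lam j * w j + lam k := by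
  rw [← sum_filter_add_sum_filter_not univ (· < k)]
  gcongr
  calc ∑ j ∈ univ.filter (¬ · < k), lam j * w j
      ≤ ∑ j ∈ univ.filter (¬ · < k), lam k * w j := by
        refine sum_le_sum fun j hj => ?_
        exact mul_le_mul_of_nonneg_right (hlam (not_lt.1 (mem_filter.1 hj).2)) (hw0 j)
    _ ≤ ∑ j, lam k * w j :=
        sum_le_sum_of_subset_of_nonneg (filter_subset _ _) fun j _ _ => mul_nonneg hk (hw0 j)
    _ ≤ lam k := by
        rw [← mul_sum]
        exact mul_le_of_le_one_right hk hw

theorem stmt_1_general {d : ℕ} (f : (Fin d → ℝ) → ℝ)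
    (μ : Measure (Fin d → ℝ))
    (hμ : μ = Measure.pi fun _ : Fin d => volume.restrict (Set.Ioo (0:ℝ) 1))
    (hD : ∀ i : Fin d, MemLp (fun p : (Fin d → ℝ) × (Fin d → ℝ) =>
      (f (Function.update p.1 i (p.2 i)) - f p.1) / (p.2 i - p.1 i)) 2 (μ.prod μ))
    (C U : Matrix (Fin d) (Fin d) ℝ) (lam : Fin d → ℝ)
    (hC : ∀ i j, C i j = ∫ z, (∫ v,
      ((f (Function.update z i (v i)) - f z) / (v i - z i)) *
      ((f (Function.update z j (v j)) - f z) / (v j - z j)) ∂μ) ∂μ)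
    (hU : Uᵀ * U = 1)
    (hdecomp : C = U * diagonal lam * Uᵀ)
    (hmono : ∀ i j : Fin d, i ≤ j → lam j ≤ lam i)
    (hnonneg : ∀ j, 0 ≤ lam j)
    (σ2 : ℝ)
    (hσpos : 0 < σ2)
    (i : Fin d) (m : ℕ) (hm : m < d) :
    (1 / (2 * σ2)) * ∫ z, (∫ v, (f z - f (Function.update z i (v i)))^2 ∂μ) ∂μ
      ≤ ((∑ j ∈ Finset.univ.filter (fun j : Fin d => j.1 < m), lam j * (U i j)^2)
          + lam ⟨m, hm⟩) / (2 * σ2) := by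
  have hCii : C i i = ∑ j, lam j * U i j ^ 2 := by
    rw [hdecomp, mul_diagonal_mul_transpose_apply_self]
  have hSobol : ∫ z, ∫ v, (f z - f (Function.update z i (v i))) ^ 2 ∂μ ∂μ ≤ C i i := by
    have : IsProbabilityMeasure (volume.restrict (Set.Ioo (0 : ℝ) 1)) := ⟨by simp⟩
    subst hμ
    simpa only [hC, ← sq] using
      integral_integral_sq_sub_update_le f i (ae_mem_Ioo_unitCube i) (hD i).integrable_sq
  have hγ := sum_mul_le_sum_filter_lt_add hmono (fun j => sq_nonneg (U i j))
    (sum_row_sq_eq_one_of_transpose_mul_self hU i).le (hnonneg ⟨m, hm⟩)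
  rw [one_div_mul_eq_div]
  gcongr
  exact hSobol.trans (hCii ▸ hγ)

/-- Truncated global activity score bound for the upper Sobol' index on the unit cube:
`S̄ᵢ ≤ (γᵢ(m) + λ_{m+1}) / (2σ²)` for `1 ≤ m ≤ d-1`. -/
theorem stmt_1 {d : ℕ} (f : (Fin d → ℝ) → ℝ)
    (μ : Measure (Fin d → ℝ))
    (hμ : μ = Measure.pi fun _ : Fin d => volume.restrict (Set.Ioo (0:ℝ) 1))
    (hf : MemLp f 2 μ)
    (hD : ∀ i : Fin d, MemLp (fun p : (Fin d → ℝ) × (Fin d → ℝ) =>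
      (f (Function.update p.1 i (p.2 i)) - f p.1) / (p.2 i - p.1 i)) 2 (μ.prod μ))
    (C U : Matrix (Fin d) (Fin d) ℝ) (lam : Fin d → ℝ)
    (hC : ∀ i j, C i j = ∫ z, (∫ v,
      ((f (Function.update z i (v i)) - f z) / (v i - z i)) *
      ((f (Function.update z j (v j)) - f z) / (v j - z j)) ∂μ) ∂μ)
    (hU : Uᵀ * U = 1)
    (hdecomp : C = U * diagonal lam * Uᵀ)
    (hmono : ∀ i j : Fin d, i ≤ j → lam j ≤ lam i)
    (hnonneg : ∀ j, 0 ≤ lam j)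
    (σ2 : ℝ) (hσ : σ2 = (∫ z, (f z)^2 ∂μ) - (∫ z, f z ∂μ)^2)
    (hσpos : 0 < σ2)
    (i : Fin d) (m : ℕ) (hm1 : 1 ≤ m) (hm : m < d) :
    (1 / (2 * σ2)) * ∫ z, (∫ v, (f z - f (Function.update z i (v i)))^2 ∂μ) ∂μ
      ≤ ((∑ j ∈ Finset.univ.filter (fun j : Fin d => j.1 < m), lam j * (U i j)^2)
          + lam ⟨m, hm⟩) / (2 * σ2) :=
  stmt_1_general f μ hμ hD C U lam hC hU hdecomp hmono hnonneg σ2 hσpos i m hm
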